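/- (Riccati comparison for bounded existence.) Let M_1, M_2 be constant real d×d matrices with M_1 symmetric positive semidefinite, and let N_1 ≥ N_2 (i.e., N_1 − N_2 PSD) be symmetric. Suppose the terminal value problem H_1' + H_1 M_1 H_1 + M_2^T H_1 + H_1 M_2 + N_1 = 0, H_1(T) = S_1, has a symmetric solution on [0,T], and S_1 ≥ S_2 (PSD order). Then the terminal value problem H_2' + H_2 M_1 H_2 + M_2^T H_2 + H_2 M_2 + N_2 = 0, H_2(T) = S_2, has a solution on [0,T] and H_1(t) ≥ H_2(t) for all t ∈ [0,T]. -/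

import Mathlib

/-!
Reversing time, `E(τ) = (H1 - H2)(T - τ)` has to solve the Riccati equation
`E' = Aᵀ E + E A - E M1 E + Q`, `E(0) = S`, with `A = M1 H1 + M2`, `Q = N1 - N2`, `S = S1 - S2`,
so it suffices to produce a positive semidefinite solution of it on `[0, T]`.
It is linearised by `E = Y X⁻¹`, where `X' = M1 Y - A X`, `Y' = Aᵀ Y + Q X`, `X(0) = 1`,
`Y(0) = S`; this linear system is solved globally by Picard iteration (a power of the Picard
operator is a contraction). The key identity is `(Xᵀ Y)' = Yᵀ M1 Y + Xᵀ Q X ≥ 0`: hence `Xᵀ Y`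
stays symmetric and positive semidefinite, and so does `E = X⁻ᵀ (Xᵀ Y) X⁻¹`. It also keeps `X`
invertible: if `X(τ) v = 0`, then `vᵀ Xᵀ Y v` increases from `vᵀ S v ≥ 0` to `0`, so it vanishes on
`[0, τ]`, forcing `M1 Y v = 0` there; then `X v` solves `x' = -A x` with `x(τ) = 0`, and
`v = x(0) = 0`.
-/

open Matrix Set Function ODE
open scoped NNReal Nat

attribute [local instance] Matrix.normedAddCommGroup Matrix.normedSpace

section Picard

variable {E : Type*} [NormedAddCommGroup E] [NormedSpace ℝ E]
  {F : ℝ → E → E} {K : ℝ≥0} {a b : ℝ}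

theorem dist_picard_le (hF : Continuous (uncurry F)) (hK : ∀ t, LipschitzWith K (F t))
    {α β : ℝ → E} (hα : Continuous α) (hβ : Continuous β) (z₀ : E) {t : ℝ} (ht : a ≤ t) :
    dist (picard F a z₀ α t) (picard F a z₀ β t) ≤ K * ∫ s in a..t, dist (α s) (β s) := by
  have hFα : Continuous fun s => F s (α s) := hF.comp (continuous_id.prodMk hα)
  have hFβ : Continuous fun s => F s (β s) := hF.comp (continuous_id.prodMk hβ)
  rw [dist_eq_norm, picard_apply, picard_apply, add_sub_add_left_eq_sub,
    ← intervalIntegral.integral_sub (hFα.intervalIntegrable a t) (hFβ.intervalIntegrable a t),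
    ← intervalIntegral.integral_const_mul]
  refine intervalIntegral.norm_integral_le_of_norm_le ht
    (Filter.Eventually.of_forall fun s _ => ?_)
    ((continuous_const.mul (hα.dist hβ)).intervalIntegrable _ _)
  rw [← dist_eq_norm]
  exact (hK s).dist_le_mul _ _

variable [CompleteSpace E]

theorem hasDerivAt_picard (hF : Continuous (uncurry F)) {α : ℝ → E} (hα : Continuous α)
    (z₀ : E) (t : ℝ) : HasDerivAt (picard F a z₀ α) (F t (α t)) t :=
  ((hF.comp (continuous_id.prodMk hα)).integral_hasStrictDerivAt a t).hasDerivAt.const_add z₀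

noncomputable def picardIcc (hab : a ≤ b) (hF : Continuous (uncurry F)) (z₀ : E)
    (u : C(Icc a b, E)) : C(Icc a b, E) :=
  ⟨fun t => picard F a z₀ (u ∘ projIcc a b hab) t,
    (Differentiable.continuous fun t =>
      (hasDerivAt_picard hF (u.continuous.comp continuous_projIcc) z₀ t).differentiableAt).comp
        continuous_subtype_val⟩

theorem dist_iterate_picardIcc_apply_le (hab : a ≤ b) (hF : Continuous (uncurry F))
    (hK : ∀ t, LipschitzWith K (F t)) (z₀ : E) (u v : C(Icc a b, E)) (n : ℕ) (t : Icc a b) :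
    dist ((picardIcc hab hF z₀)^[n] u t) ((picardIcc hab hF z₀)^[n] v t) ≤
      (K * (t - a)) ^ n / n ! * dist u v := by
  induction n generalizing t with
  | zero => simpa using ContinuousMap.dist_apply_le_dist (f := u) (g := v) t
  | succ n ih =>
    rw [iterate_succ_apply', iterate_succ_apply']
    set u' := (picardIcc hab hF z₀)^[n] u
    set v' := (picardIcc hab hF z₀)^[n] v
    calc dist (picardIcc hab hF z₀ u' t) (picardIcc hab hF z₀ v' t)
        ≤ K * ∫ s in a..t, dist ((u' ∘ projIcc a b hab) s) ((v' ∘ projIcc a b hab) s) :=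
          dist_picard_le hF hK (u'.continuous.comp continuous_projIcc)
            (v'.continuous.comp continuous_projIcc) z₀ t.2.1
      _ ≤ K * ∫ s in a..t, (K * (s - a)) ^ n / n ! * dist u v := by
          gcongr
          refine intervalIntegral.integral_mono_on t.2.1 ?_ ?_ fun s hs => ?_
          · exact (by fun_prop : Continuous _).intervalIntegrable _ _
          · exact (by fun_prop : Continuous _).intervalIntegrable _ _
          · have hs' : s ∈ Icc a b := ⟨hs.1, hs.2.trans t.2.2⟩
            simpa [projIcc_of_mem hab hs'] using ih ⟨s, hs'⟩
      _ = (K * (t - a)) ^ (n + 1) / (n + 1)! * dist u v := by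
          simp only [mul_pow, intervalIntegral.integral_mul_const, intervalIntegral.integral_div,
            intervalIntegral.integral_const_mul, intervalIntegral.integral_comp_sub_right
              (fun x => x ^ n), sub_self, integral_pow, Nat.factorial_succ]
          push_cast
          field_simp
          ring

theorem exists_isFixedPt_picardIcc (hab : a ≤ b) (hF : Continuous (uncurry F))
    (hK : ∀ t, LipschitzWith K (F t)) (z₀ : E) :
    ∃ u, IsFixedPt (picardIcc hab hF z₀) u := by
  obtain ⟨n, hn⟩ := (FloorSemiring.tendsto_pow_div_factorial_atTop (K * (b - a))
    |>.eventually (gt_mem_nhds zero_lt_one)).exists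
  have hc : (0 : ℝ) ≤ (K * (b - a)) ^ n / n ! := by
    have := sub_nonneg.2 hab
    positivity
  have hcontr : ContractingWith (⟨_, hc⟩ : ℝ≥0) (picardIcc hab hF z₀)^[n] := by
    refine ⟨hn, LipschitzWith.of_dist_le_mul fun u v => ?_⟩
    refine (ContinuousMap.dist_le (by positivity)).2 fun t => ?_
    refine (dist_iterate_picardIcc_apply_le hab hF hK z₀ u v n t).trans ?_
    have := sub_nonneg.2 t.2.1
    change _ ≤ (K * (b - a)) ^ n / n ! * dist u v
    gcongr
    exact t.2.2
  exact ⟨_, hcontr.isFixedPt_fixedPoint_iterate⟩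

theorem exists_hasDerivAt_of_lipschitzWith (hab : a ≤ b) (hF : Continuous (uncurry F))
    (hK : ∀ t, LipschitzWith K (F t)) (z₀ : E) :
    ∃ Z : ℝ → E, Z a = z₀ ∧ ∀ t ∈ Icc a b, HasDerivAt Z (F t (Z t)) t := by
  obtain ⟨u, hu⟩ := exists_isFixedPt_picardIcc hab hF hK z₀
  refine ⟨picard F a z₀ (u ∘ projIcc a b hab), picard_apply₀, fun t ht => ?_⟩
  have hZt : picard F a z₀ (u ∘ projIcc a b hab) t = (u ∘ projIcc a b hab) t := by
    rw [Function.comp_apply, projIcc_of_mem hab ht]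
    exact congrArg (· ⟨t, ht⟩) hu
  rw [hZt]
  exact hasDerivAt_picard hF (u.continuous.comp continuous_projIcc) z₀ t

end Picard

section LinearODE

variable {E : Type*} [NormedAddCommGroup E] [NormedSpace ℝ E] {L : ℝ → E →L[ℝ] E} {a b : ℝ}

theorem exists_lipschitzWith_of_continuousOn_Icc (hL : ContinuousOn L (Icc a b)) :
    ∃ K : ℝ≥0, ∀ t ∈ Icc a b, LipschitzWith K (L t) := by
  obtain ⟨C, hC⟩ := isCompact_Icc.exists_bound_of_continuousOn hL
  refine ⟨C.toNNReal, fun t ht => (L t).lipschitz.weaken ?_⟩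
  rw [← NNReal.coe_le_coe, coe_nnnorm]
  exact (hC t ht).trans (Real.le_coe_toNNReal C)

theorem exists_hasDerivAt_clm_apply [CompleteSpace E] (hab : a ≤ b)
    (hL : ContinuousOn L (Icc a b)) (z₀ : E) :
    ∃ Z : ℝ → E, Z a = z₀ ∧ ∀ t ∈ Icc a b, HasDerivAt Z (L t (Z t)) t := by
  obtain ⟨K, hK⟩ := exists_lipschitzWith_of_continuousOn_Icc hL
  set L' := fun t => L (projIcc a b hab t)
  have hL' : Continuous L' := hL.comp_continuous (continuous_subtype_val.comp continuous_projIcc)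
    fun t => (projIcc a b hab t).2
  obtain ⟨Z, hZa, hZ⟩ := exists_hasDerivAt_of_lipschitzWith (F := fun t => L' t) hab
    ((hL'.comp continuous_fst).clm_apply continuous_snd) (fun t => hK _ (projIcc a b hab t).2) z₀
  refine ⟨Z, hZa, fun t ht => ?_⟩
  simpa [L', projIcc_of_mem hab ht] using hZ t ht

theorem eqOn_zero_of_hasDerivAt_clm_apply (hL : ContinuousOn L (Icc a b)) {x : ℝ → E}
    (hx : ∀ t ∈ Icc a b, HasDerivAt x (L t (x t)) t) (hxb : x b = 0) : EqOn x 0 (Icc a b) := by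
  obtain ⟨K, hK⟩ := exists_lipschitzWith_of_continuousOn_Icc hL
  refine ODE_solution_unique_of_mem_Icc_left (v := fun t => L t) (s := fun _ => univ)
    (g := fun _ => 0)
    (fun t ht => (hK t (Ioc_subset_Icc_self ht)).lipschitzOnWith)
    (fun t ht => (hx t ht).continuousAt.continuousWithinAt)
    (fun t ht => (hx t (Ioc_subset_Icc_self ht)).hasDerivWithinAt) (fun _ _ => mem_univ _)
    continuousOn_const (fun t _ => ?_) (fun _ _ => mem_univ _) hxb
  simpa using hasDerivWithinAt_const t (Iic t) (0 : E)

end LinearODE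

theorem LinearMap.hasDerivAt_comp {E F : Type*} [NormedAddCommGroup E] [NormedSpace ℝ E]
    [FiniteDimensional ℝ E] [NormedAddCommGroup F] [NormedSpace ℝ F] (f : E →ₗ[ℝ] F)
    {x : ℝ → E} {x' : E} {t : ℝ} (hx : HasDerivAt x x' t) :
    HasDerivAt (fun s => f (x s)) (f x') t :=
  (LinearMap.toContinuousLinearMap f).hasFDerivAt.comp_hasDerivAt t hx

section MatrixCalculus

variable {n : Type*} [Fintype n] {X Y : ℝ → Matrix n n ℝ} {X' Y' : Matrix n n ℝ} {t : ℝ}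

-- `HasDerivAt` only sees the topology, which `Matrix.linftyOpNormedRing` shares with the sup norm.
theorem HasDerivAt.matrix_mul [DecidableEq n] (hX : HasDerivAt X X' t)
    (hY : HasDerivAt Y Y' t) :
    HasDerivAt (fun s => X s * Y s) (X' * Y t + X t * Y') t :=
  letI := Matrix.linftyOpNormedRing (n := n) (α := ℝ)
  letI := Matrix.linftyOpNormedAlgebra (R := ℝ) (n := n) (α := ℝ)
  hX.mul hY

theorem HasDerivAt.matrix_inv [DecidableEq n] (hX : HasDerivAt X X' t) (hXt : IsUnit (X t)) :
    HasDerivAt (fun s => (X s)⁻¹) (-((X t)⁻¹ * X' * (X t)⁻¹)) t := by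
  let _ := Matrix.linftyOpNormedRing (n := n) (α := ℝ)
  let _ := Matrix.linftyOpNormedAlgebra (R := ℝ) (n := n) (α := ℝ)
  have _ : HasSummableGeomSeries (Matrix n n ℝ) :=
    @instHasSummableGeomSeriesOfCompleteSpace _ _ (FiniteDimensional.complete ℝ _)
  obtain ⟨u, hu⟩ := hXt
  simp_rw [nonsing_inv_eq_ringInverse]
  have hinv := hasFDerivAt_ringInverse (𝕜 := ℝ) u
  rw [hu] at hinv
  rw [← hu, Ring.inverse_unit]
  exact (hinv.comp_hasDerivAt t hX).congr_deriv (by simp)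

theorem HasDerivAt.matrix_transpose (hX : HasDerivAt X X' t) :
    HasDerivAt (fun s => (X s)ᵀ) X'ᵀ t :=
  (transposeLinearEquiv n n ℝ ℝ).toLinearMap.hasDerivAt_comp hX

theorem HasDerivAt.matrix_mulVec (hX : HasDerivAt X X' t) (v : n → ℝ) :
    HasDerivAt (fun s => X s *ᵥ v) (X' *ᵥ v) t :=
  LinearMap.hasDerivAt_comp
    { toFun := (· *ᵥ v), map_add' := by simp [add_mulVec], map_smul' := by simp [smul_mulVec] }
    hX

theorem HasDerivAt.dotProduct_mulVec (hX : HasDerivAt X X' t) (u v : n → ℝ) :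
    HasDerivAt (fun s => u ⬝ᵥ X s *ᵥ v) (u ⬝ᵥ X' *ᵥ v) t :=
  LinearMap.hasDerivAt_comp
    { toFun := (u ⬝ᵥ · *ᵥ v), map_add' := by simp [add_mulVec],
      map_smul' := by simp [smul_mulVec] }
    hX

end MatrixCalculus

theorem Matrix.PosSemidef.isSymm {n : Type*} {A : Matrix n n ℝ} (hA : A.PosSemidef) : A.IsSymm :=
  isHermitian_iff_isSymm.1 hA.1

section Hamiltonian

variable {n : Type*} [Fintype n]

noncomputable def hamiltonianCLM (A R Q : Matrix n n ℝ) :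
    (Matrix n n ℝ × Matrix n n ℝ) →L[ℝ] Matrix n n ℝ × Matrix n n ℝ :=
  LinearMap.toContinuousLinearMap
    { toFun := fun p => (R * p.2 - A * p.1, Aᵀ * p.2 + Q * p.1)
      map_add' := fun p q => by
        simp only [Prod.fst_add, Prod.snd_add, Matrix.mul_add, Prod.mk_add_mk]
        congr 1 <;> abel
      map_smul' := fun c p => by simp [smul_sub] }

@[simp]
theorem hamiltonianCLM_apply (A R Q : Matrix n n ℝ) (p : Matrix n n ℝ × Matrix n n ℝ) :
    hamiltonianCLM A R Q p = (R * p.2 - A * p.1, Aᵀ * p.2 + Q * p.1) :=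
  rfl

variable [DecidableEq n]

structure IsHamiltonianSolution (A : ℝ → Matrix n n ℝ) (R Q S : Matrix n n ℝ) (T : ℝ)
    (X Y : ℝ → Matrix n n ℝ) : Prop where
  left_zero : X 0 = 1
  right_zero : Y 0 = S
  hasDerivAt_left : ∀ τ ∈ Icc 0 T, HasDerivAt X (R * Y τ - A τ * X τ) τ
  hasDerivAt_right : ∀ τ ∈ Icc 0 T, HasDerivAt Y ((A τ)ᵀ * Y τ + Q * X τ) τ

variable {A : ℝ → Matrix n n ℝ} {R Q S : Matrix n n ℝ} {T : ℝ}

theorem IsHamiltonianSolution.exists (hT : 0 ≤ T) (hA : ContinuousOn A (Icc 0 T)) :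
    ∃ X Y, IsHamiltonianSolution A R Q S T X Y := by
  have hL : ContinuousOn (fun τ => hamiltonianCLM (A τ) R Q) (Icc 0 T) :=
    continuousOn_clm_apply.2 fun p =>
      show ContinuousOn (fun τ => (R * p.2 - A τ * p.1, (A τ)ᵀ * p.2 + Q * p.1)) _ by fun_prop
  obtain ⟨Z, hZ0, hZ⟩ := exists_hasDerivAt_clm_apply hT hL (1, S)
  exact ⟨fun τ => (Z τ).1, fun τ => (Z τ).2, by simp [hZ0], by simp [hZ0],
    fun τ hτ => (LinearMap.fst ℝ _ _).hasDerivAt_comp (hZ τ hτ),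
    fun τ hτ => (LinearMap.snd ℝ _ _).hasDerivAt_comp (hZ τ hτ)⟩

namespace IsHamiltonianSolution

variable {X Y : ℝ → Matrix n n ℝ}

theorem hasDerivAt_transpose_mul (h : IsHamiltonianSolution A R Q S T X Y) (hR : R.IsSymm)
    {τ : ℝ} (hτ : τ ∈ Icc 0 T) :
    HasDerivAt (fun σ => (X σ)ᵀ * Y σ) ((Y τ)ᵀ * R * Y τ + (X τ)ᵀ * Q * X τ) τ :=
  ((h.hasDerivAt_left τ hτ).matrix_transpose.matrix_mul (h.hasDerivAt_right τ hτ)).congr_deriv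
    (by simp only [transpose_sub, transpose_mul, hR.eq]; noncomm_ring)

theorem isSymm_transpose_mul (h : IsHamiltonianSolution A R Q S T X Y) (hR : R.IsSymm)
    (hQ : Q.IsSymm) (hS : S.IsSymm) {τ : ℝ} (hτ : τ ∈ Icc 0 T) : ((X τ)ᵀ * Y τ).IsSymm := by
  set G := fun σ => ((X σ)ᵀ * Y σ)ᵀ - (X σ)ᵀ * Y σ
  have hG : ∀ σ ∈ Icc 0 T, HasDerivAt G 0 σ := fun σ hσ =>
    ((h.hasDerivAt_transpose_mul hR hσ).matrix_transpose.sub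
      (h.hasDerivAt_transpose_mul hR hσ)).congr_deriv
      (by simp [transpose_add, transpose_mul, hR.eq, hQ.eq, Matrix.mul_assoc])
  have hGτ := constant_of_has_deriv_right_zero
    (fun σ hσ => (hG σ hσ).continuousAt.continuousWithinAt)
    (fun σ hσ => (hG σ (Ico_subset_Icc_self hσ)).hasDerivWithinAt) τ hτ
  simpa [G, IsSymm, h.left_zero, h.right_zero, hS.eq, sub_eq_zero] using hGτ

theorem monotoneOn_dotProduct_mulVec (h : IsHamiltonianSolution A R Q S T X Y)
    (hR : R.PosSemidef) (hQ : Q.PosSemidef) (v : n → ℝ) :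
    MonotoneOn (fun τ => v ⬝ᵥ ((X τ)ᵀ * Y τ) *ᵥ v) (Icc 0 T) := by
  have hq (τ) (hτ : τ ∈ Icc 0 T) := (h.hasDerivAt_transpose_mul hR.isSymm hτ).dotProduct_mulVec v v
  refine monotoneOn_of_hasDerivWithinAt_nonneg (convex_Icc 0 T)
    (fun τ hτ => (hq τ hτ).continuousAt.continuousWithinAt)
    (fun τ hτ => (hq τ (interior_subset hτ)).hasDerivWithinAt) fun τ _ => ?_
  have hD := (hR.conjTranspose_mul_mul_same (Y τ)).add (hQ.conjTranspose_mul_mul_same (X τ))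
  simpa using hD.dotProduct_mulVec_nonneg v

theorem posSemidef_transpose_mul (h : IsHamiltonianSolution A R Q S T X Y)
    (hR : R.PosSemidef) (hQ : Q.PosSemidef) (hS : S.PosSemidef) {τ : ℝ} (hτ : τ ∈ Icc 0 T) :
    ((X τ)ᵀ * Y τ).PosSemidef := by
  refine .of_dotProduct_mulVec_nonneg (isHermitian_iff_isSymm.2 <|
    h.isSymm_transpose_mul hR.isSymm hQ.isSymm hS.isSymm hτ) fun v => ?_
  have h0 : 0 ≤ v ⬝ᵥ ((X 0)ᵀ * Y 0) *ᵥ v := by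
    simpa [h.left_zero, h.right_zero] using hS.dotProduct_mulVec_nonneg v
  simpa using h0.trans (h.monotoneOn_dotProduct_mulVec hR hQ v ⟨le_rfl, hτ.1.trans hτ.2⟩ hτ hτ.1)

theorem mulVec_mulVec_eq_zero (h : IsHamiltonianSolution A R Q S T X Y) (hR : R.PosSemidef)
    (hQ : Q.PosSemidef) (hS : S.PosSemidef) {τ : ℝ} (hτ : τ ∈ Icc 0 T) (hτ0 : 0 < τ)
    {v : n → ℝ} (hv : X τ *ᵥ v = 0) {σ : ℝ} (hσ : σ ∈ Icc 0 τ) : R *ᵥ (Y σ *ᵥ v) = 0 := by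
  have hsub : Icc 0 τ ⊆ Icc 0 T := Icc_subset_Icc_right hτ.2
  set q := fun σ => v ⬝ᵥ ((X σ)ᵀ * Y σ) *ᵥ v
  have hmono : MonotoneOn q (Icc 0 τ) := (h.monotoneOn_dotProduct_mulVec hR hQ v).mono hsub
  have hq0 : 0 ≤ q 0 := by
    simpa [q, h.left_zero, h.right_zero] using hS.dotProduct_mulVec_nonneg v
  have hqτ : q τ = 0 := by
    simp [q, ← mulVec_mulVec, dotProduct_mulVec, vecMul_transpose, hv]
  have hq : EqOn q 0 (Icc 0 τ) := fun σ hσ =>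
    le_antisymm (hqτ ▸ hmono hσ ⟨hτ0.le, le_rfl⟩ hσ.2 :)
      (hq0.trans (hmono ⟨le_rfl, hτ0.le⟩ hσ hσ.1))
  have hD : v ⬝ᵥ ((Y σ)ᵀ * R * Y σ + (X σ)ᵀ * Q * X σ) *ᵥ v = 0 :=
    (uniqueDiffOn_Icc hτ0 σ hσ).eq_deriv _
      ((h.hasDerivAt_transpose_mul hR.isSymm (hsub hσ)).dotProduct_mulVec v v).hasDerivWithinAt
      ((hasDerivWithinAt_const σ _ 0).congr hq (hq hσ))
  have hRY := hR.dotProduct_mulVec_nonneg (Y σ *ᵥ v)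
  have hQX := hQ.dotProduct_mulVec_nonneg (X σ *ᵥ v)
  simp only [add_mulVec, dotProduct_add, ← mulVec_mulVec, dotProduct_mulVec _ (_ᵀ),
    vecMul_transpose] at hD
  simp only [star_trivial] at hRY hQX
  refine (hR.dotProduct_mulVec_zero_iff _).1 ?_
  simp only [star_trivial]
  linarith

theorem isUnit_left (h : IsHamiltonianSolution A R Q S T X Y) (hA : ContinuousOn A (Icc 0 T))
    (hR : R.PosSemidef) (hQ : Q.PosSemidef) (hS : S.PosSemidef) {τ : ℝ} (hτ : τ ∈ Icc 0 T) :
    IsUnit (X τ) := by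
  rw [isUnit_iff_isUnit_det, isUnit_iff_ne_zero]
  intro hdet
  obtain ⟨v, hv0, hv⟩ := exists_mulVec_eq_zero_iff.2 hdet
  refine hv0 ?_
  rcases hτ.1.eq_or_lt with rfl | hτ0
  · simpa [h.left_zero] using hv
  have hsub : Icc 0 τ ⊆ Icc 0 T := Icc_subset_Icc_right hτ.2
  have hA' := hA.mono hsub
  have hL : ContinuousOn (fun σ => -LinearMap.toContinuousLinearMap (toLin' (A σ))) (Icc 0 τ) :=
    continuousOn_clm_apply.2 fun y => show ContinuousOn (fun σ => -(A σ *ᵥ y)) _ by fun_prop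
  -- `X σ *ᵥ v` solves `x' = -A x` on `[0, τ]` because `R Y v` vanishes there.
  have hx := eqOn_zero_of_hasDerivAt_clm_apply hL (x := fun σ => X σ *ᵥ v)
    (fun σ hσ => ((h.hasDerivAt_left σ (hsub hσ)).matrix_mulVec v).congr_deriv
      (by simp [sub_mulVec, ← mulVec_mulVec, h.mulVec_mulVec_eq_zero hR hQ hS hτ hτ0 hv hσ])) hv
  simpa [h.left_zero] using hx ⟨le_rfl, hτ0.le⟩

theorem hasDerivAt_mul_inv (h : IsHamiltonianSolution A R Q S T X Y) {τ : ℝ}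
    (hτ : τ ∈ Icc 0 T) (hX : IsUnit (X τ)) :
    HasDerivAt (fun σ => Y σ * (X σ)⁻¹)
      ((A τ)ᵀ * (Y τ * (X τ)⁻¹) + Y τ * (X τ)⁻¹ * A τ - Y τ * (X τ)⁻¹ * R * (Y τ * (X τ)⁻¹) + Q)
      τ := by
  refine ((h.hasDerivAt_right τ hτ).matrix_mul
    ((h.hasDerivAt_left τ hτ).matrix_inv hX)).congr_deriv ?_
  have hXW : X τ * (X τ)⁻¹ = 1 := mul_nonsing_inv _ ((isUnit_iff_isUnit_det _).1 hX)
  have hexpand : ∀ W : Matrix n n ℝ,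
      ((A τ)ᵀ * Y τ + Q * X τ) * W + Y τ * -(W * (R * Y τ - A τ * X τ) * W) =
        (A τ)ᵀ * (Y τ * W) + Y τ * W * A τ * (X τ * W) - Y τ * W * R * (Y τ * W) +
          Q * (X τ * W) := by
    intro W; noncomm_ring
  rw [hexpand, hXW, Matrix.mul_one, Matrix.mul_one]

theorem posSemidef_mul_inv (h : IsHamiltonianSolution A R Q S T X Y) (hR : R.PosSemidef)
    (hQ : Q.PosSemidef) (hS : S.PosSemidef) {τ : ℝ} (hτ : τ ∈ Icc 0 T) (hX : IsUnit (X τ)) :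
    (Y τ * (X τ)⁻¹).PosSemidef := by
  have hXW : X τ * (X τ)⁻¹ = 1 := mul_nonsing_inv _ ((isUnit_iff_isUnit_det _).1 hX)
  have := (h.posSemidef_transpose_mul hR hQ hS hτ).conjTranspose_mul_mul_same (X τ)⁻¹
  rwa [conjTranspose_eq_transpose_of_trivial, ← Matrix.mul_assoc, ← transpose_mul, hXW,
    transpose_one, Matrix.one_mul] at this

end IsHamiltonianSolution

theorem exists_posSemidef_riccati_solution (hT : 0 ≤ T) (hA : ContinuousOn A (Icc 0 T))
    (hR : R.PosSemidef) (hQ : Q.PosSemidef) (hS : S.PosSemidef) :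
    ∃ E : ℝ → Matrix n n ℝ, E 0 = S ∧ ∀ τ ∈ Icc 0 T,
      (E τ).PosSemidef ∧ HasDerivAt E ((A τ)ᵀ * E τ + E τ * A τ - E τ * R * E τ + Q) τ := by
  obtain ⟨X, Y, h⟩ := IsHamiltonianSolution.exists (R := R) (Q := Q) (S := S) hT hA
  refine ⟨fun τ => Y τ * (X τ)⁻¹, by simp [h.left_zero, h.right_zero], fun τ hτ => ?_⟩
  have hX := h.isUnit_left hA hR hQ hS hτ
  exact ⟨h.posSemidef_mul_inv hR hQ hS hτ hX, h.hasDerivAt_mul_inv hτ hX⟩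

end Hamiltonian

theorem riccati_comparison_general
    {d : ℕ} (T : ℝ) (hT : 0 < T)
    (M1 M2 N1 N2 S1 S2 : Matrix (Fin d) (Fin d) ℝ)
    (hM1 : M1.PosSemidef)
    (hN : (N1 - N2).PosSemidef)
    (hS : (S1 - S2).PosSemidef)
    (H1 : ℝ → Matrix (Fin d) (Fin d) ℝ)
    (hH1sym : ∀ t ∈ Set.Icc (0 : ℝ) T, (H1 t)ᵀ = H1 t)
    (hH1 : ∀ t ∈ Set.Icc (0 : ℝ) T,
      HasDerivAt H1 (-(H1 t * M1 * H1 t + M2ᵀ * H1 t + H1 t * M2 + N1)) t)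
    (hH1T : H1 T = S1) :
    ∃ H2 : ℝ → Matrix (Fin d) (Fin d) ℝ,
      (∀ t ∈ Set.Icc (0 : ℝ) T, (H2 t)ᵀ = H2 t)
      ∧ (∀ t ∈ Set.Icc (0 : ℝ) T,
          HasDerivAt H2 (-(H2 t * M1 * H2 t + M2ᵀ * H2 t + H2 t * M2 + N2)) t)
      ∧ H2 T = S2
      ∧ ∀ t ∈ Set.Icc (0 : ℝ) T, (H1 t - H2 t).PosSemidef := by
  have hmem : MapsTo (T - ·) (Icc 0 T) (Icc 0 T) := fun t ht =>
    ⟨sub_nonneg.2 ht.2, sub_le_self T ht.1⟩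
  have hH1c : ContinuousOn H1 (Icc 0 T) := fun t ht => (hH1 t ht).continuousAt.continuousWithinAt
  have hH1rev : ContinuousOn (fun τ => H1 (T - τ)) (Icc 0 T) := hH1c.comp (by fun_prop) hmem
  obtain ⟨E, hE0, hE⟩ := exists_posSemidef_riccati_solution (A := fun τ => M1 * H1 (T - τ) + M2)
    hT.le (by fun_prop) hM1 hN hS
  refine ⟨fun t => H1 t - E (T - t), fun t ht => ?_, fun t ht => ?_, by simp [hH1T, hE0],
    fun t ht => by simpa using (hE _ (hmem ht)).1⟩
  · rw [transpose_sub, hH1sym t ht, (hE _ (hmem ht)).1.isSymm.eq]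
  · refine ((hH1 t ht).sub ((hE _ (hmem ht)).2.comp_const_sub T t)).congr_deriv ?_
    simp only [sub_sub_cancel, transpose_add, transpose_mul,
      hM1.isSymm.eq, hH1sym t ht]
    noncomm_ring

theorem riccati_comparison
    {d : ℕ} (T : ℝ) (hT : 0 < T)
    (M1 M2 N1 N2 S1 S2 : Matrix (Fin d) (Fin d) ℝ)
    (hM1 : M1.PosSemidef)
    (hN1 : N1ᵀ = N1) (hN2 : N2ᵀ = N2) (hN : (N1 - N2).PosSemidef)
    (hS1 : S1ᵀ = S1) (hS2 : S2ᵀ = S2) (hS : (S1 - S2).PosSemidef)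
    (H1 : ℝ → Matrix (Fin d) (Fin d) ℝ)
    (hH1sym : ∀ t ∈ Set.Icc (0 : ℝ) T, (H1 t)ᵀ = H1 t)
    (hH1 : ∀ t ∈ Set.Icc (0 : ℝ) T,
      HasDerivAt H1 (-(H1 t * M1 * H1 t + M2ᵀ * H1 t + H1 t * M2 + N1)) t)
    (hH1T : H1 T = S1) :
    ∃ H2 : ℝ → Matrix (Fin d) (Fin d) ℝ,
      (∀ t ∈ Set.Icc (0 : ℝ) T, (H2 t)ᵀ = H2 t)
      ∧ (∀ t ∈ Set.Icc (0 : ℝ) T,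
          HasDerivAt H2 (-(H2 t * M1 * H2 t + M2ᵀ * H2 t + H2 t * M2 + N2)) t)
      ∧ H2 T = S2
      ∧ ∀ t ∈ Set.Icc (0 : ℝ) T, (H1 t - H2 t).PosSemidef :=
  riccati_comparison_general T hT M1 M2 N1 N2 S1 S2 hM1 hN hS H1 hH1sym hH1 hH1T
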